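/- arXiv:2107.01736 — 3 statements merged into one kernel-verified Lean document; each statement's English description precedes it below -/
import Mathlib

section
/- Let V be a vector space with d² = 0, ∂² = 0, Δ = d∂ + ∂d, and suppose Δ is diagonalizable (V decomposes as a direct sum of eigenspaces of Δ). Then every d-closed vector f can be written as f = h + d α for some h ∈ ker(Δ) and some α ∈ V. Consequently the quotient map ker(d) → ker(d)/im(d) restricted to ker(Δ) ∩ ker(d) is surjective. -/
/-- If Δ = d∂ + ∂d is diagonalizable, every d-closed vector is a harmonic vector
plus a d-exact one; hence harmonic cocycles surject onto the d-cohomology. -/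
theorem closed_eq_harmonic_add_exact {K V : Type*} [Field K] [AddCommGroup V] [Module K V]
    (d p : V →ₗ[K] V) (hd : d ∘ₗ d = 0) (hp : p ∘ₗ p = 0)
    (hdiag : (⨆ μ : K, Module.End.eigenspace (d ∘ₗ p + p ∘ₗ d) μ) = ⊤) :
    ∀ f : V, d f = 0 → ∃ h α : V, (d ∘ₗ p + p ∘ₗ d) h = 0 ∧ f = h + d α := by
  classical
  intro f hf
  set Δ : V →ₗ[K] V := d ∘ₗ p + p ∘ₗ d with hΔdef
  have hdd : ∀ x, d (d x) = 0 := fun x => by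
    simpa using LinearMap.ext_iff.mp hd x
  have hΔapp : ∀ x, Δ x = d (p x) + p (d x) := fun x => rfl
  -- Δ commutes with d
  have hcomm : ∀ x, Δ (d x) = d (Δ x) := by
    intro x
    rw [hΔapp, hΔapp, map_add, hdd, hdd, map_zero, add_zero, zero_add]
  set E : K → Submodule K V := fun μ => Module.End.eigenspace Δ μ with hE
  have hmem : ∀ μ (x : V), x ∈ E μ ↔ Δ x = μ • x := by
    intro μ x; exact Module.End.mem_eigenspace_iff
  have hinv : ∀ μ, ∀ x ∈ E μ, d x ∈ E μ := by
    intro μ x hx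
    rw [hmem] at hx ⊢
    rw [hcomm, hx, map_smul]
  set D : ∀ μ : K, E μ →ₗ[K] E μ := fun μ => d.restrict (hinv μ) with hD
  set L : (Π₀ μ : K, E μ) →ₗ[K] V :=
    DFinsupp.lsum ℕ (M := fun μ => ↥(E μ)) (fun μ => (E μ).subtype) with hL
  have hLsum : ∀ c : Π₀ μ : K, E μ, L c = c.sum fun _ xi => (xi : V) := by
    intro c
    simp [hL, DFinsupp.lsum_apply_apply, DFinsupp.sumAddHom_apply]
  obtain ⟨c, hc⟩ := (Submodule.mem_iSup_iff_exists_dfinsupp E f).mp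
    (hdiag ▸ Submodule.mem_top (x := f))
  -- each component of f is d-closed
  have hinj : Function.Injective L :=
    (iSupIndep_iff_dfinsupp_lsum_injective E).mp (Module.End.eigenspaces_iSupIndep Δ)
  have hc0 : DFinsupp.mapRange.linearMap D c = 0 := by
    apply hinj
    rw [map_zero, hLsum, DFinsupp.mapRange.linearMap_apply,
      DFinsupp.sum_mapRange_index (by intro i; rfl)]
    have : (c.sum fun μ (x : E μ) => d (x : V)) = d (c.sum fun _ (x : _) => (x : V)) := by
      rw [DFinsupp.sum, DFinsupp.sum, map_sum]
    simp only [hD, LinearMap.restrict_apply]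
    rw [this, ← hLsum, hc, hf]
  have hdc : ∀ μ, d (c μ : V) = 0 := by
    intro μ
    have := DFunLike.congr_fun hc0 μ
    rw [DFinsupp.mapRange.linearMap_apply, DFinsupp.mapRange_apply] at this
    have := congrArg (Submodule.subtype (E μ)) this
    simpa [hD, LinearMap.restrict_apply] using this
  -- the candidate α and h
  set α : V := c.sum fun μ (x : E μ) => μ⁻¹ • p (x : V) with hα
  refine ⟨f - d α, α, ?_, by abel⟩
  have hda : d α = c.sum fun μ (x : E μ) => μ⁻¹ • d (p (x : V)) := by
    rw [hα, DFinsupp.sum, DFinsupp.sum, map_sum]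
    exact Finset.sum_congr rfl fun μ _ => by rw [map_smul]
  have hfc : f = c.sum fun _ (x : _) => (x : V) := by rw [← hc, hLsum]
  rw [hfc, hda, DFinsupp.sum, DFinsupp.sum, ← Finset.sum_sub_distrib, map_sum]
  apply Finset.sum_eq_zero
  intro μ _
  by_cases hμ : μ = 0
  · subst hμ
    have h0 : Δ (c (0:K) : V) = 0 := by
      have := (hmem 0 _).mp (c (0:K)).2
      simpa using this
    simp [h0]
  · -- μ ≠ 0 : the term itself vanishes
    have hx := (hmem μ _).mp (c μ).2
    rw [hΔapp, hdc μ, map_zero, add_zero] at hx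
    rw [hx, smul_smul, inv_mul_cancel₀ hμ, one_smul, sub_self, map_zero]
end

section
/- Let V be a vector space with nilpotent operators d, ∂ (d² = ∂² = 0) satisfying the disjointness conditions: im(d) ∩ ker(∂) = {0} and im(∂) ∩ ker(d) = {0}. Then ker(Δ) = ker(d) ∩ ker(∂), where Δ = d∂ + ∂d. -/
/-- Under disjointness of d and ∂, the harmonic vectors for Δ = d∂ + ∂d are exactly
those that are simultaneously d-closed and ∂-closed. -/
theorem ker_laplacian_eq_inf_kernels {K V : Type*} [Field K] [AddCommGroup V] [Module K V]
    (d p : V →ₗ[K] V) (hd : d ∘ₗ d = 0) (hp : p ∘ₗ p = 0)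
    (hdisj1 : ∀ x : V, d (p x) = 0 → p x = 0)
    (hdisj2 : ∀ x : V, p (d x) = 0 → d x = 0) :
    LinearMap.ker (d ∘ₗ p + p ∘ₗ d) = LinearMap.ker d ⊓ LinearMap.ker p := by
  ext x
  simp only [LinearMap.mem_ker, Submodule.mem_inf, LinearMap.add_apply, LinearMap.comp_apply]
  constructor
  · intro h
    have hdd : ∀ y : V, d (d y) = 0 := fun y => congrFun (congrArg DFunLike.coe hd) y
    -- apply d to h
    have h1 : d (d (p x)) + d (p (d x)) = 0 := by
      rw [← map_add, h, map_zero]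
    rw [hdd, zero_add] at h1
    have h2 : p (d x) = 0 := hdisj1 (d x) h1
    have h3 : d x = 0 := hdisj2 x h2
    rw [h2, add_zero] at h
    have h4 : p x = 0 := hdisj1 x h
    exact ⟨h3, h4⟩
  · rintro ⟨h1, h2⟩
    rw [h1, h2, map_zero, map_zero, add_zero]
end

section
/- On the space of bihomogeneous elements F = F_{a(n),b(m)} Y^{a(n)} Z^{b(m)} of ℝ[Y,Z] (zero-forms, no θ variables) satisfying the Young condition t₁ F = 0, the Laplace operator Δ = σ₋ σ₊ + σ₊ σ₋ (with σ₋ = Σ θ^a ∂/∂Z^a and σ₊ as its adjoint) acts as multiplication by m = deg_Z F. Consequently the zeroth σ₋-cohomology of the complex in the GL(d) case is the space of polynomials depending only on Y: H⁰(σ₋) = { F(Y) }. -/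
open MvPolynomial TensorProduct

abbrev PolyYZ (d : ℕ) := MvPolynomial (Fin d ⊕ Fin d) ℝ
abbrev GrassTheta (d : ℕ) := ExteriorAlgebra ℝ (Fin d → ℝ)
abbrev SupA (d : ℕ) := PolyYZ d ⊗[ℝ] GrassTheta d

noncomputable def theta {d : ℕ} (a : Fin d) : GrassTheta d :=
  ExteriorAlgebra.ι ℝ (Pi.single a 1)

/-- ∂/∂θ^a: the contraction (interior product) dual to θ^a. -/
noncomputable def dtheta {d : ℕ} (a : Fin d) : GrassTheta d →ₗ[ℝ] GrassTheta d :=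
  CliffordAlgebra.contractLeft (Q := (0 : QuadraticForm ℝ (Fin d → ℝ)))
    (LinearMap.proj a)

/-- σ₋ = Σ_a θ^a ∂/∂Z^a. -/
noncomputable def sigmaMinus (d : ℕ) : SupA d →ₗ[ℝ] SupA d :=
  ∑ a : Fin d,
    TensorProduct.map (pderiv (Sum.inr a)).toLinearMap
      (LinearMap.mulLeft ℝ (theta a))

/-- Z_θ = Σ_a Z^a ∂/∂θ^a. -/
noncomputable def Ztheta (d : ℕ) : SupA d →ₗ[ℝ] SupA d :=
  ∑ a : Fin d,
    TensorProduct.map (LinearMap.mulLeft ℝ (X (Sum.inr a))) (dtheta a)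

/-- Y_θ = Σ_a Y^a ∂/∂θ^a. -/
noncomputable def Ytheta (d : ℕ) : SupA d →ₗ[ℝ] SupA d :=
  ∑ a : Fin d,
    TensorProduct.map (LinearMap.mulLeft ℝ (X (Sum.inl a))) (dtheta a)

/-- t₂ = Σ_a Z^a ∂/∂Y^a. -/
noncomputable def T2 (d : ℕ) : SupA d →ₗ[ℝ] SupA d :=
  TensorProduct.map
    (∑ a : Fin d,
      (LinearMap.mulLeft ℝ (X (Sum.inr a))).comp (pderiv (Sum.inl a)).toLinearMap)
    LinearMap.id

/-- σ₊ evaluated on the eigenspace where t₀ acts by the scalar k. -/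
noncomputable def sigmaPlus (d : ℕ) (k : ℝ) : SupA d →ₗ[ℝ] SupA d :=
  ((k + 1) / (k + 2)) • Ztheta d - (1 / (k + 2)) • (Ytheta d ∘ₗ T2 d)

/-- t₁ = Σ_a Y^a ∂/∂Z^a on the polynomial ring. -/
noncomputable def t1p (d : ℕ) : PolyYZ d →ₗ[ℝ] PolyYZ d :=
  ∑ a : Fin d,
    (LinearMap.mulLeft ℝ (X (Sum.inl a))).comp (pderiv (Sum.inr a)).toLinearMap

/-- Euler operator in Y on the polynomial ring. -/
noncomputable def eulerY (d : ℕ) : PolyYZ d →ₗ[ℝ] PolyYZ d :=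
  ∑ a : Fin d,
    (LinearMap.mulLeft ℝ (X (Sum.inl a))).comp (pderiv (Sum.inl a)).toLinearMap

/-- Euler operator in Z on the polynomial ring. -/
noncomputable def eulerZ (d : ℕ) : PolyYZ d →ₗ[ℝ] PolyYZ d :=
  ∑ a : Fin d,
    (LinearMap.mulLeft ℝ (X (Sum.inr a))).comp (pderiv (Sum.inr a)).toLinearMap



lemma pd_mul_same {d : ℕ} (i : Fin d ⊕ Fin d) (r : PolyYZ d) :
    pderiv i (X i * r) = r + X i * pderiv i r := by
  simp [pderiv_mul, add_comm]

lemma pd_mul_ne {d : ℕ} {i j : Fin d ⊕ Fin d} (h : i ≠ j) (r : PolyYZ d) :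
    pderiv i (X j * r) = X j * pderiv i r := by
  simp [pderiv_mul, Ne.symm h]

lemma pderiv_comm' {d : ℕ} (i j : Fin d ⊕ Fin d) (p : PolyYZ d) :
    pderiv i (pderiv j p) = pderiv j (pderiv i p) := by
  rcases eq_or_ne i j with h | h
  · subst h; rfl
  · induction p using MvPolynomial.induction_on' with
    | monomial s a =>
        simp only [pderiv_monomial]
        rw [tsub_right_comm]
        congr 1
        rw [Finsupp.tsub_apply, Finsupp.tsub_apply, Finsupp.single_apply,
          Finsupp.single_apply, if_neg (by simpa using h.symm), if_neg (by simpa using h)]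
        simp
        ring
    | add p q hp hq => simp [hp, hq]

noncomputable def opD (d : ℕ) (u v : Fin d → Fin d ⊕ Fin d) : PolyYZ d →ₗ[ℝ] PolyYZ d :=
  ∑ a : Fin d, (LinearMap.mulLeft ℝ (X (u a))).comp (pderiv (v a)).toLinearMap

lemma opD_apply {d : ℕ} (u v : Fin d → Fin d ⊕ Fin d) (q : PolyYZ d) :
    opD d u v q = ∑ a : Fin d, X (u a) * pderiv (v a) q := by
  simp [opD, LinearMap.sum_apply]

lemma opD_mul {d : ℕ} {u v : Fin d → Fin d ⊕ Fin d} (hv : Function.Injective v)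
    (c : Fin d) (r : PolyYZ d) :
    opD d u v (X (v c) * r) = X (u c) * r + X (v c) * opD d u v r := by
  classical
  rw [opD_apply, opD_apply, Finset.mul_sum]
  have : ∀ a : Fin d, X (u a) * pderiv (v a) (X (v c) * r)
      = (if a = c then X (u a) * r else 0) + X (v c) * (X (u a) * pderiv (v a) r) := by
    intro a
    rcases eq_or_ne a c with h | h
    · subst h; rw [pd_mul_same, if_pos rfl]; ring
    · rw [pd_mul_ne (fun hh => h (hv hh))]; simp [h]; ring
  rw [Finset.sum_congr rfl fun a _ => this a, Finset.sum_add_distrib,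
    Finset.sum_ite_eq' Finset.univ c (fun a => X (u a) * r)]
  simp

lemma opD_mul_ne {d : ℕ} {u v : Fin d → Fin d ⊕ Fin d} {j : Fin d ⊕ Fin d}
    (h : ∀ a, v a ≠ j) (r : PolyYZ d) :
    opD d u v (X j * r) = X j * opD d u v r := by
  rw [opD_apply, opD_apply, Finset.mul_sum]
  refine Finset.sum_congr rfl fun a _ => ?_
  rw [pd_mul_ne (h a)]; ring

lemma sum_swap' {d : ℕ} (u v s t : Fin d → Fin d ⊕ Fin d) (q : PolyYZ d) :
    ∑ b : Fin d, X (u b) * ∑ a : Fin d, X (v a) * pderiv (s a) (pderiv (t b) q)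
      = ∑ a : Fin d, X (v a) * ∑ b : Fin d, X (u b) * pderiv (t b) (pderiv (s a) q) := by
  simp_rw [Finset.mul_sum]
  rw [Finset.sum_comm]
  refine Finset.sum_congr rfl fun a _ => Finset.sum_congr rfl fun b _ => ?_
  rw [pderiv_comm']
  ring

noncomputable def t1p' (d : ℕ) : PolyYZ d →ₗ[ℝ] PolyYZ d := opD d Sum.inl Sum.inr
noncomputable def t2p' (d : ℕ) : PolyYZ d →ₗ[ℝ] PolyYZ d := opD d Sum.inr Sum.inl
noncomputable def eY (d : ℕ) : PolyYZ d →ₗ[ℝ] PolyYZ d := opD d Sum.inl Sum.inl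
noncomputable def eZ (d : ℕ) : PolyYZ d →ₗ[ℝ] PolyYZ d := opD d Sum.inr Sum.inr


lemma t2p'_apply {d : ℕ} (q : PolyYZ d) :
    t2p' d q = ∑ a : Fin d, X (Sum.inr a) * pderiv (Sum.inl a) q := opD_apply _ _ q

lemma K1 {d : ℕ} (q : PolyYZ d) :
    t2p' d (t1p' d q) = eZ d q + ∑ a : Fin d, X (Sum.inl a) * t2p' d (pderiv (Sum.inr a) q) := by
  rw [t1p', opD_apply, map_sum]
  have : ∀ a : Fin d, t2p' d (X (Sum.inl a) * pderiv (Sum.inr a) q)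
      = X (Sum.inr a) * pderiv (Sum.inr a) q
        + X (Sum.inl a) * t2p' d (pderiv (Sum.inr a) q) :=
    fun a => opD_mul (fun _ _ h => Sum.inl_injective h) a _
  rw [Finset.sum_congr rfl fun a _ => this a, Finset.sum_add_distrib, eZ, opD_apply]

lemma K2 {d : ℕ} (q : PolyYZ d) :
    t1p' d (t2p' d q) = t2p' d (t1p' d q) + eY d q - eZ d q := by
  have h1 : t1p' d (t2p' d q)
      = eY d q + ∑ b : Fin d, X (Sum.inr b) * t1p' d (pderiv (Sum.inl b) q) := by
    rw [t2p', opD_apply, map_sum]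
    have : ∀ b : Fin d, t1p' d (X (Sum.inr b) * pderiv (Sum.inl b) q)
        = X (Sum.inl b) * pderiv (Sum.inl b) q
          + X (Sum.inr b) * t1p' d (pderiv (Sum.inl b) q) :=
      fun b => opD_mul (fun _ _ h => Sum.inr_injective h) b _
    rw [Finset.sum_congr rfl fun b _ => this b, Finset.sum_add_distrib, eY, opD_apply]
  have h2 : ∑ b : Fin d, X (Sum.inr b) * t1p' d (pderiv (Sum.inl b) q)
      = ∑ a : Fin d, X (Sum.inl a) * t2p' d (pderiv (Sum.inr a) q) := by
    simp_rw [t1p', t2p', opD_apply]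
    exact sum_swap' Sum.inr Sum.inl Sum.inr Sum.inl q
  rw [h1, h2, K1]
  abel

lemma K3 {d : ℕ} (q : PolyYZ d) :
    eY d (t2p' d q) = t2p' d (eY d q) - t2p' d q := by
  have h1 : eY d (t2p' d q)
      = ∑ b : Fin d, X (Sum.inr b) * eY d (pderiv (Sum.inl b) q) := by
    rw [t2p', opD_apply (d := d), map_sum]
    exact Finset.sum_congr rfl fun b _ => opD_mul_ne (fun a => Sum.inl_ne_inr) _
  have h2 : t2p' d (eY d q)
      = t2p' d q + ∑ a : Fin d, X (Sum.inl a) * t2p' d (pderiv (Sum.inl a) q) := by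
    rw [eY, opD_apply (d := d), map_sum]
    have : ∀ a : Fin d, t2p' d (X (Sum.inl a) * pderiv (Sum.inl a) q)
        = X (Sum.inr a) * pderiv (Sum.inl a) q
          + X (Sum.inl a) * t2p' d (pderiv (Sum.inl a) q) :=
      fun a => opD_mul (fun _ _ h => Sum.inl_injective h) a _
    rw [Finset.sum_congr rfl fun a _ => this a, Finset.sum_add_distrib, ← t2p'_apply]
  have h3 : ∑ b : Fin d, X (Sum.inr b) * eY d (pderiv (Sum.inl b) q)
      = ∑ a : Fin d, X (Sum.inl a) * t2p' d (pderiv (Sum.inl a) q) := by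
    simp_rw [eY, t2p', opD_apply]
    exact sum_swap' Sum.inr Sum.inl Sum.inl Sum.inl q
  rw [h1, h3, h2]
  abel

lemma K4 {d : ℕ} (q : PolyYZ d) :
    eZ d (t2p' d q) = t2p' d (eZ d q) + t2p' d q := by
  have h1 : eZ d (t2p' d q)
      = t2p' d q + ∑ b : Fin d, X (Sum.inr b) * eZ d (pderiv (Sum.inl b) q) := by
    rw [t2p', opD_apply (d := d), map_sum]
    have : ∀ b : Fin d, eZ d (X (Sum.inr b) * pderiv (Sum.inl b) q)
        = X (Sum.inr b) * pderiv (Sum.inl b) q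
          + X (Sum.inr b) * eZ d (pderiv (Sum.inl b) q) :=
      fun b => opD_mul (fun _ _ h => Sum.inr_injective h) b _
    rw [Finset.sum_congr rfl fun b _ => this b, Finset.sum_add_distrib, ← t2p'_apply]
  have h2 : t2p' d (eZ d q)
      = ∑ a : Fin d, X (Sum.inr a) * t2p' d (pderiv (Sum.inr a) q) := by
    rw [eZ, opD_apply (d := d), map_sum]
    exact Finset.sum_congr rfl fun a _ => opD_mul_ne (fun b => Sum.inl_ne_inr) _
  have h3 : ∑ b : Fin d, X (Sum.inr b) * eZ d (pderiv (Sum.inl b) q)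
      = ∑ a : Fin d, X (Sum.inr a) * t2p' d (pderiv (Sum.inr a) q) := by
    simp_rw [eZ, t2p', opD_apply]
    exact sum_swap' Sum.inr Sum.inr Sum.inr Sum.inl q
  rw [h1, h3, h2]
  abel

lemma X_mul_pderiv_monomial {d : ℕ} (i : Fin d ⊕ Fin d) (s : Fin d ⊕ Fin d →₀ ℕ) (r : ℝ) :
    X i * pderiv i (monomial s r) = (s i : ℝ) • monomial s r := by
  rw [pderiv_monomial, X, monomial_mul, smul_monomial, one_mul]
  rcases Nat.eq_zero_or_pos (s i) with h | h
  · simp [h]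
  · congr 1
    · rw [add_tsub_cancel_of_le]
      rwa [Finsupp.single_le_iff]
    · simp [mul_comm]

lemma eY_monomial {d : ℕ} (s : Fin d ⊕ Fin d →₀ ℕ) (r : ℝ) :
    eY d (monomial s r) = ((∑ a : Fin d, s (Sum.inl a) : ℕ) : ℝ) • monomial s r := by
  rw [eY, opD_apply]
  push_cast
  rw [Finset.sum_smul]
  exact Finset.sum_congr rfl fun a _ => X_mul_pderiv_monomial _ s r

lemma eY_neg_eig {d : ℕ} (q : PolyYZ d) (c : ℝ) (hc : c < 0) (h : eY d q = c • q) :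
    q = 0 := by
  by_contra hq
  obtain ⟨s, hs⟩ := MvPolynomial.support_nonempty.mpr hq
  have hne : coeff s q ≠ 0 := mem_support_iff.mp hs
  have e1 : eY d q = ∑ t ∈ q.support,
      ((∑ a : Fin d, t (Sum.inl a) : ℕ) : ℝ) • monomial t (coeff t q) := by
    conv_lhs => rw [q.as_sum]
    rw [map_sum]
    exact Finset.sum_congr rfl fun t _ => eY_monomial t _
  have hco : coeff s (eY d q) = ((∑ a : Fin d, s (Sum.inl a) : ℕ) : ℝ) * coeff s q := by
    classical
    rw [e1, coeff_sum]
    simp only [coeff_smul, coeff_monomial, smul_eq_mul, mul_ite, mul_zero]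
    rw [Finset.sum_ite_eq' q.support s, if_pos hs]
  have h2 : ((∑ a : Fin d, s (Sum.inl a) : ℕ) : ℝ) * coeff s q = c * coeff s q := by
    rw [← hco, h, coeff_smul, smul_eq_mul]
  have h3 : ((∑ a : Fin d, s (Sum.inl a) : ℕ) : ℝ) = c := mul_right_cancel₀ hne h2
  have : (0:ℝ) ≤ c := h3 ▸ Nat.cast_nonneg _
  linarith

lemma young_le {d n m : ℕ} (p : PolyYZ d) (h1 : t1p' d p = 0)
    (hY : eY d p = (n : ℝ) • p) (hZ : eZ d p = (m : ℝ) • p) (hp : p ≠ 0) :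
    (m : ℝ) ≤ (n : ℝ) := by
  set f : ℕ → PolyYZ d := fun j => ((t2p' d) ^ j) p with hf
  have hsucc : ∀ j, f (j + 1) = t2p' d (f j) := by
    intro j
    simp only [hf, pow_succ']
    rfl
  have hEY : ∀ j, eY d (f j) = ((n : ℝ) - j) • f j := by
    intro j; induction j with
    | zero => simpa [hf] using hY
    | succ j ih =>
        rw [hsucc, K3, ih, map_smul, ← hsucc]
        push_cast
        module
  have hEZ : ∀ j, eZ d (f j) = ((m : ℝ) + j) • f j := by
    intro j; induction j with
    | zero => simpa [hf] using hZ
    | succ j ih =>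
        rw [hsucc, K4, ih, map_smul, ← hsucc]
        push_cast
        module
  have hF : ∀ j, t1p' d (f (j + 1)) = (((j : ℝ) + 1) * ((n : ℝ) - m - j)) • f j := by
    intro j; induction j with
    | zero =>
        have hf0 : f 0 = p := by simp [hf]
        rw [hsucc, hf0, K2, h1, map_zero, hY, hZ]
        show (0:PolyYZ d) + _ - _ = _
        rw [zero_add, ← sub_smul]
        norm_num
    | succ j ih =>
        rw [hsucc, K2, ih, map_smul, ← hsucc, hEY (j+1), hEZ (j+1)]
        rw [← add_smul, ← sub_smul]
        congr 1
        push_cast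
        ring
  by_contra hmn
  push_neg at hmn
  have hnz : ∀ j, f j ≠ 0 := by
    intro j; induction j with
    | zero => simpa [hf] using hp
    | succ j ih =>
        intro h0
        have hj := hF j
        rw [h0, map_zero] at hj
        have hscal : (((j : ℝ) + 1) * ((n : ℝ) - m - j)) ≠ 0 := by
          have hjn : (0:ℝ) ≤ (j:ℝ) := Nat.cast_nonneg _
          have : (n:ℝ) - m - j < 0 := by linarith
          have h2 : (0:ℝ) < (j:ℝ) + 1 := by linarith
          exact mul_ne_zero (ne_of_gt h2) (ne_of_lt this)
        refine ih ?_
        calc f j = (((j : ℝ) + 1) * ((n : ℝ) - m - j))⁻¹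
            • ((((j : ℝ) + 1) * ((n : ℝ) - m - j)) • f j) := by
              rw [smul_smul, inv_mul_cancel₀ hscal, one_smul]
          _ = 0 := by rw [← hj, smul_zero]
  exact hnz (n + 1) (eY_neg_eig _ _ (by push_cast; linarith) (hEY (n+1)))


lemma dtheta_theta {d : ℕ} (b a : Fin d) :
    dtheta b (theta a) = if b = a then 1 else 0 := by
  rw [dtheta, theta]
  rw [show ExteriorAlgebra.ι ℝ (Pi.single a 1 : Fin d → ℝ)
      = CliffordAlgebra.ι (0 : QuadraticForm ℝ (Fin d → ℝ)) (Pi.single a 1) from rfl]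
  rw [CliffordAlgebra.contractLeft_ι]
  simp [Pi.single_apply, apply_ite (algebraMap ℝ (GrassTheta d))]

lemma sumXdth {d : ℕ} (f : Fin d → Fin d ⊕ Fin d) (q : PolyYZ d) (a : Fin d) :
    (∑ b : Fin d, TensorProduct.map (LinearMap.mulLeft ℝ (X (f b))) (dtheta b))
        (q ⊗ₜ[ℝ] theta a) = (X (f a) * q) ⊗ₜ[ℝ] 1 := by
  classical
  rw [LinearMap.sum_apply]
  have : ∀ b : Fin d,
      (TensorProduct.map (LinearMap.mulLeft ℝ (X (f b))) (dtheta b)) (q ⊗ₜ[ℝ] theta a)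
        = if b = a then (X (f b) * q) ⊗ₜ[ℝ] (1 : GrassTheta d) else 0 := by
    intro b
    rw [TensorProduct.map_tmul, dtheta_theta]
    split
    · rfl
    · rw [TensorProduct.tmul_zero]
  rw [Finset.sum_congr rfl fun b _ => this b,
    Finset.sum_ite_eq' Finset.univ a fun b => (X (f b) * q) ⊗ₜ[ℝ] (1 : GrassTheta d),
    if_pos (Finset.mem_univ a)]

lemma Ztheta_tmul {d : ℕ} (q : PolyYZ d) (a : Fin d) :
    Ztheta d (q ⊗ₜ[ℝ] theta a) = (X (Sum.inr a) * q) ⊗ₜ[ℝ] 1 :=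
  sumXdth Sum.inr q a

lemma Ytheta_tmul {d : ℕ} (q : PolyYZ d) (a : Fin d) :
    Ytheta d (q ⊗ₜ[ℝ] theta a) = (X (Sum.inl a) * q) ⊗ₜ[ℝ] 1 :=
  sumXdth Sum.inl q a

lemma T2_tmul {d : ℕ} (q : PolyYZ d) (g : GrassTheta d) :
    T2 d (q ⊗ₜ[ℝ] g) = (t2p' d q) ⊗ₜ[ℝ] g := by
  rw [T2, TensorProduct.map_tmul]
  rfl

lemma sigmaMinus_tmul_one {d : ℕ} (p : PolyYZ d) :
    sigmaMinus d (p ⊗ₜ[ℝ] 1) = ∑ a : Fin d, (pderiv (Sum.inr a) p) ⊗ₜ[ℝ] theta a := by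
  rw [sigmaMinus, LinearMap.sum_apply]
  refine Finset.sum_congr rfl fun a _ => ?_
  rw [TensorProduct.map_tmul]
  simp [theta]

lemma tensor_one_ne_zero {d : ℕ} {p : PolyYZ d} (hp : p ≠ 0) :
    p ⊗ₜ[ℝ] (1 : GrassTheta d) ≠ 0 := by
  intro h
  apply hp
  set F := ((TensorProduct.rid ℝ (PolyYZ d)).toLinearMap ∘ₗ
    (TensorProduct.map (LinearMap.id)
      (ExteriorAlgebra.algebraMapInv (R := ℝ) (M := Fin d → ℝ)).toLinearMap)) with hF
  have h2 : F (p ⊗ₜ[ℝ] (1 : GrassTheta d)) = p := by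
    rw [hF, LinearMap.comp_apply, TensorProduct.map_tmul]
    simp
  have h3 : F (p ⊗ₜ[ℝ] (1 : GrassTheta d)) = 0 := by rw [h]; exact LinearMap.map_zero F
  rw [h2] at h3
  exact h3

/-- On zero-forms F of bidegree (n,m) satisfying the Young condition t₁F = 0,
the Laplacian Δ = σ₋σ₊ + σ₊σ₋ (which reduces to σ₊σ₋, with σ₊ evaluated at the
t₀-eigenvalue n−m+1 of σ₋F) acts as multiplication by m.  Hence Δ F = 0 iff
m = 0, i.e. H⁰(σ₋) consists of the polynomials depending only on Y. -/
theorem laplacian_on_zero_forms (d : ℕ) :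
    ∀ (n m : ℕ) (p : PolyYZ d), t1p d p = 0 →
      eulerY d p = (n : ℝ) • p → eulerZ d p = (m : ℝ) • p →
      sigmaPlus d ((n : ℝ) - m + 1) (sigmaMinus d (p ⊗ₜ[ℝ] 1)) =
          (m : ℝ) • (p ⊗ₜ[ℝ] (1 : GrassTheta d)) ∧
      (p ≠ 0 →
        (sigmaPlus d ((n : ℝ) - m + 1) (sigmaMinus d (p ⊗ₜ[ℝ] 1)) = 0 ↔ m = 0)) := by
  intro n m p h1 hY hZ
  have h1' : t1p' d p = 0 := h1
  have hY' : eY d p = (n : ℝ) • p := hY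
  have hZ' : eZ d p = (m : ℝ) • p := hZ
  have hsum : (∑ a : Fin d, X (Sum.inl a) * t2p' d (pderiv (Sum.inr a) p))
      = -((m : ℝ) • p) := by
    have hk := K1 p
    rw [h1', map_zero, hZ'] at hk
    exact eq_neg_of_add_eq_zero_left ((add_comm _ _).trans hk.symm)
  have hZm : Ztheta d (sigmaMinus d (p ⊗ₜ[ℝ] 1))
      = (m : ℝ) • (p ⊗ₜ[ℝ] (1 : GrassTheta d)) := by
    rw [sigmaMinus_tmul_one, map_sum,
      Finset.sum_congr rfl fun a _ => Ztheta_tmul (pderiv (Sum.inr a) p) a,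
      ← TensorProduct.sum_tmul,
      show (∑ a : Fin d, X (Sum.inr a) * pderiv (Sum.inr a) p) = eZ d p
        from (opD_apply _ _ p).symm,
      hZ', TensorProduct.smul_tmul']
  have hYm : Ytheta d (T2 d (sigmaMinus d (p ⊗ₜ[ℝ] 1)))
      = -((m : ℝ) • (p ⊗ₜ[ℝ] (1 : GrassTheta d))) := by
    rw [sigmaMinus_tmul_one, map_sum, map_sum]
    have hterm : ∀ a : Fin d,
        Ytheta d (T2 d ((pderiv (Sum.inr a) p) ⊗ₜ[ℝ] theta a))
          = (X (Sum.inl a) * t2p' d (pderiv (Sum.inr a) p)) ⊗ₜ[ℝ] 1 := by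
      intro a
      rw [T2_tmul, Ytheta_tmul]
    rw [Finset.sum_congr rfl fun a _ => hterm a, ← TensorProduct.sum_tmul, hsum,
      TensorProduct.neg_tmul, TensorProduct.smul_tmul']
  have hmain : sigmaPlus d ((n : ℝ) - m + 1) (sigmaMinus d (p ⊗ₜ[ℝ] 1)) =
      (m : ℝ) • (p ⊗ₜ[ℝ] (1 : GrassTheta d)) := by
    rcases eq_or_ne p 0 with rfl | hp
    · rw [TensorProduct.zero_tmul, LinearMap.map_zero, LinearMap.map_zero, smul_zero]
    · have hmn : (m : ℝ) ≤ (n : ℝ) := young_le p h1' hY' hZ' hp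
      have hk : ((n : ℝ) - m + 1) + 2 ≠ 0 := by
        intro h0; linarith
      rw [sigmaPlus, LinearMap.sub_apply, LinearMap.smul_apply, LinearMap.smul_apply,
        LinearMap.comp_apply, hZm, hYm, smul_neg, sub_neg_eq_add,
        smul_smul, smul_smul, ← add_smul]
      congr 1
      field_simp
      ring
  refine ⟨hmain, fun hp => ?_⟩
  rw [hmain]
  constructor
  · intro h0
    by_contra hm
    have hm' : ((m : ℕ) : ℝ) ≠ 0 := Nat.cast_ne_zero.mpr hm
    have hzero : p ⊗ₜ[ℝ] (1 : GrassTheta d) = 0 := by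
      calc p ⊗ₜ[ℝ] (1 : GrassTheta d)
          = ((m : ℝ))⁻¹ • ((m : ℝ) • (p ⊗ₜ[ℝ] (1 : GrassTheta d))) := by
            rw [smul_smul, inv_mul_cancel₀ hm', one_smul]
        _ = 0 := by rw [h0, smul_zero]
    exact tensor_one_ne_zero hp hzero
  · rintro rfl
    simp
end
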